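/- arXiv:1704.07235 — 2 statements merged into one kernel-verified Lean document; each statement's English description precedes it below -/
import Mathlib

section
/- For the comonotonic sum of any two continuous random variables X and Y (i.e., Y = g(X) with g nondecreasing and continuous), VaR is additive: VaR_q(X + Y) = VaR_q(X) + VaR_q(Y) for all q ∈ (0,1). -/
/-!
Both VaRs are images of `VaR_q(X)` under nondecreasing continuous maps (`g` and `id + g`),
and the left quantile commutes with such maps: the quantile set of a right-continuous CDF is the
closed ray `[VaR_q(X), ∞)`, and left-continuity of the map at its endpoint transports this ray. -/

open MeasureTheory Filter Topology ProbabilityTheory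

/-- Value-at-Risk at level `q`: the left `q`-quantile
`VaR_q(Z) = inf {z : P(Z ≤ z) ≥ q}`. -/
noncomputable def VaR {Ω : Type*} [MeasurableSpace Ω] (P : Measure Ω) (q : ℝ)
    (Z : Ω → ℝ) : ℝ :=
  sInf {z : ℝ | q ≤ (P {ω | Z ω ≤ z}).toReal}

theorem StieltjesFunction.sInf_le_iff {F : StieltjesFunction ℝ} {q : ℝ}
    (hbot : ∃ b, F b < q) (htop : ∃ t, q ≤ F t) (z : ℝ) :
    sInf {x | q ≤ F x} ≤ z ↔ q ≤ F z := by
  set S := {x | q ≤ F x}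
  obtain ⟨b, hb⟩ := hbot
  have hbdd : BddBelow S := ⟨b, fun x hx => (F.mono.reflect_lt (hb.trans_le hx)).le⟩
  have hmem : sInf S ∈ S := by
    have hright : ∀ x ∈ Set.Ioi (sInf S), q ≤ F x := fun x hx => by
      obtain ⟨s, hs, hsx⟩ := exists_lt_of_csInf_lt htop hx
      exact le_trans hs (F.mono hsx.le)
    exact ge_of_tendsto ((F.right_continuous _).mono Set.Ioi_subset_Ici_self).tendsto
      (eventually_nhdsWithin_of_forall hright)
  exact ⟨fun hz => hmem.trans (F.mono hz), fun hz => csInf_le hbdd hz⟩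

section VaR

variable {Ω : Type*} [MeasurableSpace Ω] {P : Measure Ω}

theorem measure_le_toReal_eq_cdf_map [IsProbabilityMeasure P] {X : Ω → ℝ} (hX : Measurable X)
    (z : ℝ) : (P {ω | X ω ≤ z}).toReal = cdf (P.map X) z := by
  have := Measure.isProbabilityMeasure_map (μ := P) hX.aemeasurable
  rw [cdf_eq_real, measureReal_def, Measure.map_apply hX measurableSet_Iic]
  rfl

theorem VaR_le_iff [IsProbabilityMeasure P] {X : Ω → ℝ} (hX : Measurable X) {q : ℝ}
    (hq : q ∈ Set.Ioo (0 : ℝ) 1) (z : ℝ) :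
    VaR P q X ≤ z ↔ q ≤ (P {ω | X ω ≤ z}).toReal := by
  simp only [VaR, measure_le_toReal_eq_cdf_map hX]
  have := Measure.isProbabilityMeasure_map (μ := P) hX.aemeasurable
  exact StieltjesFunction.sInf_le_iff
    ((tendsto_cdf_atBot (P.map X)).eventually (eventually_lt_nhds hq.1)).exists
    ((tendsto_cdf_atTop (P.map X)).eventually (eventually_ge_nhds hq.2)).exists z

theorem VaR_eq_of_forall_le_iff {Z : Ω → ℝ} {q m : ℝ}
    (hm : ∀ z, q ≤ (P {ω | Z ω ≤ z}).toReal ↔ m ≤ z) : VaR P q Z = m := by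
  have hset : {z | q ≤ (P {ω | Z ω ≤ z}).toReal} = Set.Ici m := Set.ext hm
  rw [VaR, hset, csInf_Ici]

theorem le_measure_comp_toReal_iff [IsFiniteMeasure P] {X : Ω → ℝ} {q m : ℝ}
    (hm : ∀ z, q ≤ (P {ω | X ω ≤ z}).toReal ↔ m ≤ z) {h : ℝ → ℝ} (hh : Monotone h)
    (hcont : ContinuousWithinAt h (Set.Iio m) m) (z : ℝ) :
    q ≤ (P {ω | h (X ω) ≤ z}).toReal ↔ h m ≤ z := by
  constructor
  · intro hz
    by_contra! hlt
    obtain ⟨x, hzx, hxm⟩ : ∃ x, z < h x ∧ x < m :=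
      ((hcont.eventually (lt_mem_nhds hlt)).and self_mem_nhdsWithin).exists
    have hsub : {ω | h (X ω) ≤ z} ⊆ {ω | X ω ≤ x} := fun ω hω =>
      le_of_not_gt fun hx => (hzx.trans_le (hh hx.le)).not_ge hω
    exact hxm.not_ge <| (hm x).1 <|
      hz.trans (ENNReal.toReal_mono (measure_ne_top P _) (measure_mono hsub))
  · intro hz
    have hsub : {ω | X ω ≤ m} ⊆ {ω | h (X ω) ≤ z} := fun ω hω => (hh hω).trans hz
    exact ((hm m).2 le_rfl).trans (ENNReal.toReal_mono (measure_ne_top P _) (measure_mono hsub))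

theorem VaR_comp_of_monotone [IsProbabilityMeasure P] {X : Ω → ℝ} (hX : Measurable X) {q : ℝ}
    (hq : q ∈ Set.Ioo (0 : ℝ) 1) {h : ℝ → ℝ} (hh : Monotone h)
    (hcont : ContinuousWithinAt h (Set.Iio (VaR P q X)) (VaR P q X)) :
    VaR P q (fun ω => h (X ω)) = h (VaR P q X) :=
  VaR_eq_of_forall_le_iff
    (le_measure_comp_toReal_iff (fun z => (VaR_le_iff hX hq z).symm) hh hcont)

end VaR

theorem comonotonic_VaR_additive_general
    {Ω : Type*} [MeasurableSpace Ω] (P : Measure Ω) [IsProbabilityMeasure P]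
    (X : Ω → ℝ) (hX : Measurable X)
    (g : ℝ → ℝ) (hg : Monotone g) (hgcont : Continuous g)
    (Y : Ω → ℝ) (hYdef : Y = fun ω => g (X ω)) :
    ∀ q ∈ Set.Ioo (0:ℝ) 1,
      VaR P q (fun ω => X ω + Y ω) = VaR P q X + VaR P q Y := by
  rintro q hq
  subst hYdef
  rw [VaR_comp_of_monotone hX hq hg hgcont.continuousWithinAt,
    VaR_comp_of_monotone (h := fun x => x + g x) hX hq (monotone_id.add hg)
      (continuous_id.add hgcont).continuousWithinAt]

/-- For the comonotonic sum of two continuous random variables, i.e. `Y = g(X)` with `g`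
nondecreasing and continuous, VaR is additive:
`VaR_q(X + Y) = VaR_q(X) + VaR_q(Y)` for all `q ∈ (0,1)`. -/
theorem comonotonic_VaR_additive
    {Ω : Type*} [MeasurableSpace Ω] (P : Measure Ω) [IsProbabilityMeasure P]
    (X : Ω → ℝ) (hX : Measurable X)
    (hXcont : Continuous fun x : ℝ => (P {ω | X ω ≤ x}).toReal)
    (g : ℝ → ℝ) (hg : Monotone g) (hgcont : Continuous g)
    (Y : Ω → ℝ) (hYdef : Y = fun ω => g (X ω))
    (hYcont : Continuous fun x : ℝ => (P {ω | Y ω ≤ x}).toReal) :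
    ∀ q ∈ Set.Ioo (0:ℝ) 1,
      VaR P q (fun ω => X ω + Y ω) = VaR P q X + VaR P q Y :=
  comonotonic_VaR_additive_general P X hX g hg hgcont Y hYdef
end

section
/- For two i.i.d. Lévy(0, γ) random variables X, Y (α = 1/2, β = 1 stable), the sum X + Y is Lévy distributed with scale 4γ, and consequently VaR_q(X+Y) = 2(VaR_q(X) + VaR_q(Y)) for every q ∈ (0,1): the VaR of the sum is strictly superadditive with superadditivity ratio SR = 2. -/
open MeasureTheory ProbabilityTheory Real

/-- Density of the Lévy distribution with location `δ` and scale `γ`. -/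
noncomputable def levyDensity (δ γ x : ℝ) : ℝ :=
  if δ < x then
    Real.sqrt (γ / (2 * Real.pi)) * (x - δ) ^ (-(3:ℝ)/2) * Real.exp (-γ / (2 * (x - δ)))
  else 0

/-!
The law of `X + Y` is the convolution `f_γ ⋆ f_γ` of the Lévy densities. For `u > 0` the
substitution `w = (u - 2t) / √(t (u - t))` maps `(0, u)` onto `ℝ` and turns
`f_γ(t) f_γ(u - t) dt` into a Gaussian in `w`, whose integral is `f_{4γ}(u)`. Since `Lévy(0, 4γ)`
is also the law of `4 X`, the VaR of `X + Y` is `4 VaR(X) = 2 (VaR(X) + VaR(Y))`.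
-/

open Set
open scoped Pointwise

theorem levyDensity_of_nonpos (γ : ℝ) {x : ℝ} (hx : x ≤ 0) : levyDensity 0 γ x = 0 := by
  simp [levyDensity, hx.not_gt]

theorem levyDensity_of_pos (γ : ℝ) {x : ℝ} (hx : 0 < x) :
    levyDensity 0 γ x = √(γ / (2 * π)) / √x ^ 3 * exp (-γ / (2 * x)) := by
  have : x ^ (-(3 : ℝ) / 2) = (√x ^ 3)⁻¹ := by
    rw [neg_div, rpow_neg hx.le, sqrt_eq_rpow, ← rpow_natCast, ← rpow_mul hx.le]
    norm_num
  simp only [levyDensity, if_pos hx, sub_zero, this]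
  ring

theorem levyDensity_nonneg (γ x : ℝ) : 0 ≤ levyDensity 0 γ x := by
  unfold levyDensity; split_ifs <;> positivity

theorem measurable_levyDensity (γ : ℝ) : Measurable (levyDensity 0 γ) :=
  Measurable.ite measurableSet_Ioi (by fun_prop) measurable_const

theorem const_mul_levyDensity_const_mul {c : ℝ} (hc : 0 < c) (γ x : ℝ) :
    c * levyDensity 0 (c * γ) (c * x) = levyDensity 0 γ x := by
  rcases le_or_gt x 0 with hx | hx
  · rw [levyDensity_of_nonpos _ hx,
      levyDensity_of_nonpos _ (mul_nonpos_of_nonneg_of_nonpos hc.le hx), mul_zero]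
  have hexp : -(c * γ) / (2 * (c * x)) = -γ / (2 * x) := by field_simp
  rw [levyDensity_of_pos _ hx, levyDensity_of_pos _ (mul_pos hc hx), hexp,
    show c * γ / (2 * π) = c * (γ / (2 * π)) by ring, sqrt_mul hc.le, sqrt_mul hc.le]
  have hc' : √c ^ 2 = c := sq_sqrt hc.le
  have : 0 < √c := sqrt_pos.2 hc
  have : 0 < √x := sqrt_pos.2 hx
  field_simp
  rw [hc']

noncomputable def levyMeasure (γ : ℝ) : Measure ℝ :=
  volume.withDensity fun x => ENNReal.ofReal (levyDensity 0 γ x)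

theorem map_const_mul_levyMeasure {c : ℝ} (hc : 0 < c) (γ : ℝ) :
    (levyMeasure γ).map (c * ·) = levyMeasure (c * γ) := by
  ext s hs
  have hs' : MeasurableSet ((c * ·) ⁻¹' s) := hs.preimage (measurable_const_mul c)
  have himage : (c * ·) '' ((c * ·) ⁻¹' s) = s :=
    image_preimage_eq s (mul_left_surjective₀ hc.ne')
  rw [Measure.map_apply (measurable_const_mul c) hs, levyMeasure, levyMeasure,
    withDensity_apply _ hs', withDensity_apply _ hs]
  conv_rhs => rw [← himage]
  rw [lintegral_image_eq_lintegral_abs_deriv_mul hs'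
      (fun x _ => (hasDerivAt_const_mul c).hasDerivWithinAt) (mul_right_injective₀ hc.ne').injOn]
  refine setLIntegral_congr_fun hs' fun x _ => ?_
  rw [← ENNReal.ofReal_mul (abs_nonneg c), abs_of_pos hc,
    const_mul_levyDensity_const_mul hc]

noncomputable def levySubst (u t : ℝ) : ℝ := (u - 2 * t) / √(t * (u - t))

theorem hasDerivAt_levySubst {u t : ℝ} (ht : t ∈ Ioo 0 u) :
    HasDerivAt (levySubst u) (-(u ^ 2 / (2 * √(t * (u - t)) ^ 3))) t := by
  obtain ⟨ht0, htu⟩ := ht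
  have hA : 0 < t * (u - t) := mul_pos ht0 (by linarith)
  have hs : 0 < √(t * (u - t)) := sqrt_pos.2 hA
  have hq : HasDerivAt (fun t => t * (u - t)) (u - 2 * t) t :=
    ((hasDerivAt_id' t).mul ((hasDerivAt_id' t).const_sub u)).congr_deriv (by ring)
  have hnum : HasDerivAt (fun t => u - 2 * t) (-2) t :=
    (((hasDerivAt_id' t).const_mul 2).const_sub u).congr_deriv (by ring)
  refine (hnum.div (hq.sqrt hA.ne') hs.ne').congr_deriv ?_
  have h2 : √(t * (u - t)) ^ 2 = t * (u - t) := sq_sqrt hA.le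
  field_simp
  linear_combination (-4) * h2

theorem strictAntiOn_levySubst (u : ℝ) : StrictAntiOn (levySubst u) (Ioo 0 u) := by
  refine strictAntiOn_of_hasDerivWithinAt_neg (convex_Ioo 0 u)
    (fun t ht => (hasDerivAt_levySubst ht).continuousAt.continuousWithinAt)
    (fun t ht => (hasDerivAt_levySubst (interior_subset ht)).hasDerivWithinAt) fun t ht => ?_
  rw [interior_Ioo] at ht
  have : 0 < √(t * (u - t)) := sqrt_pos.2 (mul_pos ht.1 (by linarith [ht.2]))
  have : 0 < u := ht.1.trans ht.2
  simp only [Left.neg_neg_iff]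
  positivity

theorem levySubst_image_Ioo {u : ℝ} (hu : 0 < u) : levySubst u '' Ioo 0 u = univ := by
  refine eq_univ_of_forall fun w => ?_
  set r := √(w ^ 2 + 4)
  have hr2 : r ^ 2 = w ^ 2 + 4 := sq_sqrt (by positivity)
  have hr : 0 < r := sqrt_pos.2 (by positivity)
  obtain ⟨hwr, hwr'⟩ := abs_lt.1 (abs_lt_of_sq_lt_sq (by linarith) hr.le)
  have hprod : u * (r - w) / (2 * r) * (u - u * (r - w) / (2 * r)) = (u / r) ^ 2 := by
    field_simp
    linear_combination hr2
  -- the root in `(0, u)` of `(u - 2t)² = w² t (u - t)`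
  refine ⟨u * (r - w) / (2 * r), ⟨by positivity, ?_⟩, ?_⟩
  · rw [div_lt_iff₀ (by positivity)]
    nlinarith
  · rw [levySubst, hprod, sqrt_sq (by positivity)]
    field_simp
    ring

theorem levyDensity_mul_levyDensity_sub {γ u t : ℝ} (hγ : 0 ≤ γ) (ht : t ∈ Ioo 0 u) :
    levyDensity 0 γ t * levyDensity 0 γ (u - t) = u ^ 2 / (2 * √(t * (u - t)) ^ 3) *
      (γ / (π * u ^ 2) * exp (-(2 * γ) / u) * exp (-(γ / (2 * u)) * levySubst u t ^ 2)) := by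
  obtain ⟨a, ha, rfl⟩ : ∃ a, 0 < a ∧ a ^ 2 = t := ⟨√t, sqrt_pos.2 ht.1, sq_sqrt ht.1.le⟩
  obtain ⟨b, hb, hb2⟩ : ∃ b, 0 < b ∧ b ^ 2 = u - a ^ 2 :=
    ⟨√(u - a ^ 2), sqrt_pos.2 (sub_pos.2 ht.2), sq_sqrt (sub_pos.2 ht.2).le⟩
  obtain rfl : u = a ^ 2 + b ^ 2 := by linarith
  have hsqrt : √(a ^ 2 * b ^ 2) = a * b := by rw [← mul_pow, sqrt_sq (by positivity)]
  have hK : √(γ / (2 * π)) ^ 2 = γ / (2 * π) := sq_sqrt (by positivity)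
  have hexp : -γ / (2 * a ^ 2) + -γ / (2 * b ^ 2) = -(2 * γ) / (a ^ 2 + b ^ 2) +
      -(γ / (2 * (a ^ 2 + b ^ 2))) * ((a ^ 2 + b ^ 2 - 2 * a ^ 2) / (a * b)) ^ 2 := by
    field_simp
    ring
  rw [levySubst, add_sub_cancel_left, levyDensity_of_pos _ (by positivity),
    levyDensity_of_pos _ (by positivity), hsqrt, sqrt_sq ha.le, sqrt_sq hb.le,
    mul_assoc (γ / _), ← exp_add, ← hexp, exp_add]
  field_simp
  rw [hK]
  field_simp

theorem gaussian_const_eq_levyDensity {γ u : ℝ} (hγ : 0 < γ) (hu : 0 < u) :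
    γ / (π * u ^ 2) * exp (-(2 * γ) / u) * √(π / (γ / (2 * u))) = levyDensity 0 (4 * γ) u := by
  have hexp : -(4 * γ) / (2 * u) = -(2 * γ) / u := by field_simp; ring
  have hconst : γ / (π * u ^ 2) * √(π / (γ / (2 * u))) = √(4 * γ / (2 * π)) / √u ^ 3 := by
    refine (sq_eq_sq₀ (by positivity) (by positivity)).1 ?_
    rw [mul_pow, div_pow, div_pow, sq_sqrt (by positivity), sq_sqrt (by positivity), ← pow_mul,
      pow_mul', sq_sqrt hu.le]
    field_simp
    ring
  rw [levyDensity_of_pos _ hu, hexp, ← hconst]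
  ring

theorem lintegral_levyDensity_mul_levyDensity_sub {γ : ℝ} (hγ : 0 < γ) (u : ℝ) :
    ∫⁻ t, ENNReal.ofReal (levyDensity 0 γ t) * ENNReal.ofReal (levyDensity 0 γ (u - t))
      = ENNReal.ofReal (levyDensity 0 (4 * γ) u) := by
  simp_rw [← ENNReal.ofReal_mul (levyDensity_nonneg γ _)]
  have hsupp : Function.support
      (fun t => ENNReal.ofReal (levyDensity 0 γ t * levyDensity 0 γ (u - t))) ⊆ Ioo 0 u := by
    intro t ht
    by_contra hnot
    rcases le_or_gt t 0 with h | h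
    · exact ht (by simp [levyDensity_of_nonpos γ h])
    · have : u - t ≤ 0 := by
        by_contra h'
        exact hnot ⟨h, by linarith⟩
      exact ht (by simp [levyDensity_of_nonpos γ this])
  rw [← setLIntegral_eq_of_support_subset hsupp]
  rcases le_or_gt u 0 with hu | hu
  · simp [Ioo_eq_empty hu.not_gt, levyDensity_of_nonpos _ hu]
  set g : ℝ → ℝ := fun w => γ / (π * u ^ 2) * exp (-(2 * γ) / u) * exp (-(γ / (2 * u)) * w ^ 2)
  calc ∫⁻ t in Ioo 0 u, ENNReal.ofReal (levyDensity 0 γ t * levyDensity 0 γ (u - t))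
      = ∫⁻ t in Ioo 0 u, ENNReal.ofReal |-(u ^ 2 / (2 * √(t * (u - t)) ^ 3))|
          * ENNReal.ofReal (g (levySubst u t)) :=
        setLIntegral_congr_fun measurableSet_Ioo fun t ht => by
          rw [← ENNReal.ofReal_mul (abs_nonneg _), levyDensity_mul_levyDensity_sub hγ.le ht,
            abs_neg, abs_of_nonneg (by positivity)]
    _ = ∫⁻ w in levySubst u '' Ioo 0 u, ENNReal.ofReal (g w) :=
        (lintegral_image_eq_lintegral_abs_deriv_mul measurableSet_Ioo
          (fun t ht => (hasDerivAt_levySubst ht).hasDerivWithinAt)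
          (strictAntiOn_levySubst u).injOn fun w => ENNReal.ofReal (g w)).symm
    _ = ∫⁻ w, ENNReal.ofReal (g w) := by rw [levySubst_image_Ioo hu, Measure.restrict_univ]
    _ = ENNReal.ofReal (∫ w, g w) :=
        (ofReal_integral_eq_lintegral_ofReal
          ((integrable_exp_neg_mul_sq (by positivity)).const_mul _)
          (Filter.Eventually.of_forall fun w => by positivity)).symm
    _ = ENNReal.ofReal (levyDensity 0 (4 * γ) u) := by
        rw [integral_const_mul, integral_gaussian, gaussian_const_eq_levyDensity hγ hu]

theorem levyMeasure_conv_self {γ : ℝ} (hγ : 0 < γ) :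
    levyMeasure γ ∗ levyMeasure γ = levyMeasure (4 * γ) := by
  have hf : Measurable fun x => ENNReal.ofReal (levyDensity 0 γ x) :=
    (measurable_levyDensity γ).ennreal_ofReal
  rw [levyMeasure, levyMeasure, conv_withDensity_eq_lconvolution hf hf]
  congr 1
  funext u
  simp_rw [lconvolution_def, neg_add_eq_sub]
  exact lintegral_levyDensity_mul_levyDensity_sub hγ u

section VaR

variable {Ω : Type*} [MeasurableSpace Ω] {P : Measure Ω} {q : ℝ} {X : Ω → ℝ}

theorem VaR_congr_of_map_eq {Y : Ω → ℝ} (hX : AEMeasurable X P) (hY : AEMeasurable Y P)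
    (h : P.map X = P.map Y) : VaR P q X = VaR P q Y := by
  have hcdf (z : ℝ) : P {ω | X ω ≤ z} = P {ω | Y ω ≤ z} := by
    have := congrArg (· (Iic z)) h
    rwa [Measure.map_apply_of_aemeasurable hX measurableSet_Iic,
      Measure.map_apply_of_aemeasurable hY measurableSet_Iic] at this
  simp only [VaR, hcdf]

theorem VaR_const_mul {c : ℝ} (hc : 0 < c) : VaR P q (fun ω => c * X ω) = c * VaR P q X := by
  have hset : {z : ℝ | q ≤ (P {ω | c * X ω ≤ z}).toReal}
      = c • {z : ℝ | q ≤ (P {ω | X ω ≤ z}).toReal} := by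
    ext z
    simp only [mem_ofPred_eq, mem_smul_set_iff_inv_smul_mem₀ hc.ne', smul_eq_mul,
      ← le_div_iff₀' hc, div_eq_inv_mul]
  rw [VaR, VaR, hset, Real.sInf_smul_of_nonneg hc.le, smul_eq_mul]

end VaR

/-- For two i.i.d. Lévy(0, γ) random variables `X`, `Y`, the sum `X + Y` is Lévy
distributed with scale `4γ`, and consequently
`VaR_q(X+Y) = 2 (VaR_q(X) + VaR_q(Y))` for every `q ∈ (0,1)`: the VaR of the sum is
strictly superadditive with superadditivity ratio `SR = 2`. -/
theorem levy_sum_superadditive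
    {Ω : Type*} [MeasurableSpace Ω] (P : Measure Ω) [IsProbabilityMeasure P]
    (X Y : Ω → ℝ) (hX : Measurable X) (hY : Measurable Y)
    (hindep : IndepFun X Y P) (γ : ℝ) (hγ : 0 < γ)
    (hXdist : Measure.map X P = volume.withDensity (fun x => ENNReal.ofReal (levyDensity 0 γ x)))
    (hYdist : Measure.map Y P = volume.withDensity (fun x => ENNReal.ofReal (levyDensity 0 γ x))) :
    Measure.map (fun ω => X ω + Y ω) P
        = volume.withDensity (fun x => ENNReal.ofReal (levyDensity 0 (4 * γ) x)) ∧
    ∀ q ∈ Set.Ioo (0:ℝ) 1,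
      VaR P q (fun ω => X ω + Y ω) = 2 * (VaR P q X + VaR P q Y) := by
  have hsum : P.map (fun ω => X ω + Y ω) = levyMeasure (4 * γ) := by
    rw [← levyMeasure_conv_self hγ]
    exact (hindep.map_add_eq_map_conv_map hX hY).trans (by rw [hXdist, hYdist]; rfl)
  have hfour_mul : P.map (fun ω => 4 * X ω) = levyMeasure (4 * γ) := by
    rw [← map_const_mul_levyMeasure four_pos, levyMeasure, ← hXdist,
      Measure.map_map (measurable_const_mul 4) hX]
    rfl
  refine ⟨hsum, fun q _ => ?_⟩
  rw [VaR_congr_of_map_eq (by fun_prop) (by fun_prop) (hsum.trans hfour_mul.symm),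
    VaR_const_mul four_pos,
    VaR_congr_of_map_eq hY.aemeasurable hX.aemeasurable (hYdist.trans hXdist.symm)]
  ring
end
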